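/- arXiv:1703.00083 — 3 statements merged into one kernel-verified Lean document; each statement's English description precedes it below -/
import Mathlib

section
/- Consider the optimization problem NBO: minimize ∑_j (α_j/2)(P^g_j)² + ∑_j (β_j/2)(P^l_j)² + ∑_j (D_j/2)ω_j² + ∑_j z_j²/2 over (θ, φ, ω, P^g, P^l) subject to box constraints on P^g and P^l, the constraints P^g = P^l + p + Dω + CBCᵀθ, P^g = P^l + p + CBCᵀφ, and angle-difference bounds on Cᵀφ, where z := P^g - P^l - p - CBCᵀφ. If (θ*, φ*, ω*, P^{g*}, P^{l*}) is optimal, then ω* = 0. -/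
open Matrix

/-- Incidence matrix of a directed graph on nodes `Fin (n+1)` with `m` edges. -/
def incidenceMatrix {n m : ℕ} (src tgt : Fin m → Fin (n+1)) :
    Matrix (Fin (n+1)) (Fin m) ℝ :=
  fun j e => (if src e = j then (1 : ℝ) else 0) - (if tgt e = j then (1 : ℝ) else 0)

/-- The weighted Laplacian `C B Cᵀ`. -/
def nboLap {n m : ℕ} (src tgt : Fin m → Fin (n+1)) (b : Fin m → ℝ) :
    Matrix (Fin (n+1)) (Fin (n+1)) ℝ :=
  incidenceMatrix src tgt * Matrix.diagonal b * (incidenceMatrix src tgt)ᵀ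

/-- Feasibility for the NBO problem: box constraints on `(P^g, P^l)`, the power
balance constraints `P^g = P^l + p + Dω + CBCᵀθ` and `P^g = P^l + p + CBCᵀφ`,
and the angle-difference bounds on `Cᵀφ`. -/
def nboFeasible {n m : ℕ} (src tgt : Fin m → Fin (n+1)) (b : Fin m → ℝ)
    (D p Pglo Pghi Pllo Plhi : Fin (n+1) → ℝ) (lb ub : Fin m → ℝ)
    (θ φ ω Pg Pl : Fin (n+1) → ℝ) : Prop :=
  (∀ j, Pglo j ≤ Pg j ∧ Pg j ≤ Pghi j) ∧
  (∀ j, Pllo j ≤ Pl j ∧ Pl j ≤ Plhi j) ∧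
  (∀ j, Pg j = Pl j + p j + D j * ω j + (nboLap src tgt b).mulVec θ j) ∧
  (∀ j, Pg j = Pl j + p j + (nboLap src tgt b).mulVec φ j) ∧
  (∀ e, lb e ≤ φ (src e) - φ (tgt e) ∧ φ (src e) - φ (tgt e) ≤ ub e)

/-- NBO objective, including the augmentation term `∑_j z_j²/2` where
`z := P^g - P^l - p - CBCᵀφ`. -/
noncomputable def nboObj {n m : ℕ} (src tgt : Fin m → Fin (n+1)) (b : Fin m → ℝ)
    (α β D p : Fin (n+1) → ℝ) (φ ω Pg Pl : Fin (n+1) → ℝ) : ℝ :=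
  ∑ j, α j / 2 * Pg j ^ 2 + ∑ j, β j / 2 * Pl j ^ 2 + ∑ j, D j / 2 * ω j ^ 2 +
    ∑ j, (Pg j - Pl j - p j - (nboLap src tgt b).mulVec φ j) ^ 2 / 2

/-- If `(θ*, φ*, ω*, P^{g*}, P^{l*})` is optimal for NBO, then `ω* = 0`. -/
theorem stmt_3 {n m : ℕ} (src tgt : Fin m → Fin (n+1))
    (hconn : (SimpleGraph.fromRel (fun i j => ∃ e, src e = i ∧ tgt e = j)).Connected)
    (b : Fin m → ℝ) (hb : ∀ e, 0 < b e)
    (α β D : Fin (n+1) → ℝ)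
    (hα : ∀ j, 0 < α j) (hβ : ∀ j, 0 < β j) (hD : ∀ j, 0 < D j)
    (p Pglo Pghi Pllo Plhi : Fin (n+1) → ℝ) (lb ub : Fin m → ℝ)
    (θs φs ωs Pgs Pls : Fin (n+1) → ℝ)
    (hfeas : nboFeasible src tgt b D p Pglo Pghi Pllo Plhi lb ub θs φs ωs Pgs Pls)
    (hopt : ∀ θ φ ω Pg Pl : Fin (n+1) → ℝ,
      nboFeasible src tgt b D p Pglo Pghi Pllo Plhi lb ub θ φ ω Pg Pl →
      nboObj src tgt b α β D p φs ωs Pgs Pls ≤ nboObj src tgt b α β D p φ ω Pg Pl) :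
    ωs = 0 := by
  obtain ⟨h1, h2, h3, h4, h5⟩ := hfeas
  have hfeas' : nboFeasible src tgt b D p Pglo Pghi Pllo Plhi lb ub φs φs 0 Pgs Pls := by
    refine ⟨h1, h2, ?_, h4, h5⟩
    intro j
    simpa using h4 j
  have hle := hopt φs φs 0 Pgs Pls hfeas'
  unfold nboObj at hle
  simp only [Pi.zero_apply, ne_eq, OfNat.ofNat_ne_zero, not_false_eq_true, zero_pow,
    mul_zero, Finset.sum_const_zero, add_zero] at hle
  have hsum : ∑ j, D j / 2 * ωs j ^ 2 ≤ 0 := by linarith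
  have hall : ∀ j ∈ Finset.univ, D j / 2 * ωs j ^ 2 = 0 := by
    have hnn : ∀ j ∈ (Finset.univ : Finset (Fin (n+1))), 0 ≤ D j / 2 * ωs j ^ 2 := by
      intro j _
      have := (hD j).le
      positivity
    exact (Finset.sum_eq_zero_iff_of_nonneg hnn).mp (le_antisymm hsum (Finset.sum_nonneg hnn))
  funext j
  have := hall j (Finset.mem_univ j)
  have hD2 : D j / 2 ≠ 0 := by
    have := hD j
    positivity
  have : ωs j ^ 2 = 0 := by
    rcases mul_eq_zero.mp this with h | h
    · exact absurd h hD2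
    · exact h
  simpa using pow_eq_zero_iff (n := 2) (by norm_num) |>.mp this
end

section
/- At any optimal point of NBO, the equality CBCᵀθ* = CBCᵀφ* holds; hence (by connectedness of the graph) θ*_i - θ*_j = φ*_i - φ*_j for every edge (i,j), and therefore the line limits θ̲_{ij} ≤ θ*_i - θ*_j ≤ θ̄_{ij} are satisfied. -/
open Matrix

lemma transpose_inc_mulVec {n m : ℕ} (src tgt : Fin m → Fin (n+1)) (x : Fin (n+1) → ℝ) (e : Fin m) :
    (incidenceMatrix src tgt)ᵀ.mulVec x e = x (src e) - x (tgt e) := by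
  simp [Matrix.mulVec, dotProduct, incidenceMatrix, sub_mul,
    Finset.sum_sub_distrib]

lemma quad_form {n m : ℕ} (src tgt : Fin m → Fin (n+1)) (b : Fin m → ℝ)
    (x : Fin (n+1) → ℝ) :
    x ⬝ᵥ (nboLap src tgt b).mulVec x = ∑ e, b e * (x (src e) - x (tgt e)) ^ 2 := by
  rw [nboLap, ← Matrix.mulVec_mulVec, ← Matrix.mulVec_mulVec, Matrix.dotProduct_mulVec,
    ← Matrix.mulVec_transpose]
  have h : (incidenceMatrix src tgt)ᵀ.mulVec x = fun e => x (src e) - x (tgt e) := by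
    funext e; exact transpose_inc_mulVec src tgt x e
  rw [h]
  simp [Matrix.mulVec_diagonal, dotProduct]
  exact Finset.sum_congr rfl fun e _ => by ring

/-- At any optimal point of NBO, `CBCᵀθ* = CBCᵀφ*`; hence by connectedness
`θ*_i - θ*_j = φ*_i - φ*_j` on every edge, so the line limits
`θ̲ ≤ θ*_i - θ*_j ≤ θ̄` are satisfied. -/
theorem stmt_5 {n m : ℕ} (src tgt : Fin m → Fin (n+1))
    (hconn : (SimpleGraph.fromRel (fun i j => ∃ e, src e = i ∧ tgt e = j)).Connected)
    (b : Fin m → ℝ) (hb : ∀ e, 0 < b e)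
    (α β D : Fin (n+1) → ℝ)
    (hα : ∀ j, 0 < α j) (hβ : ∀ j, 0 < β j) (hD : ∀ j, 0 < D j)
    (p Pglo Pghi Pllo Plhi : Fin (n+1) → ℝ) (lb ub : Fin m → ℝ)
    (θs φs ωs Pgs Pls : Fin (n+1) → ℝ)
    (hfeas : nboFeasible src tgt b D p Pglo Pghi Pllo Plhi lb ub θs φs ωs Pgs Pls)
    (hopt : ∀ θ φ ω Pg Pl : Fin (n+1) → ℝ,
      nboFeasible src tgt b D p Pglo Pghi Pllo Plhi lb ub θ φ ω Pg Pl →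
      nboObj src tgt b α β D p φs ωs Pgs Pls ≤ nboObj src tgt b α β D p φ ω Pg Pl) :
    (nboLap src tgt b).mulVec θs = (nboLap src tgt b).mulVec φs ∧
    (∀ e, θs (src e) - θs (tgt e) = φs (src e) - φs (tgt e)) ∧
    (∀ e, lb e ≤ θs (src e) - θs (tgt e) ∧ θs (src e) - θs (tgt e) ≤ ub e) := by
  obtain ⟨hg, hl, h3, h4, h5⟩ := hfeas
  -- the alternative feasible point with ω = 0
  have hfeas0 : nboFeasible src tgt b D p Pglo Pghi Pllo Plhi lb ub φs φs 0 Pgs Pls := by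
    refine ⟨hg, hl, fun j => ?_, h4, h5⟩
    simpa using h4 j
  have hle := hopt φs φs 0 Pgs Pls hfeas0
  -- deduce ωs = 0
  have hsum : ∑ j, D j / 2 * ωs j ^ 2 ≤ 0 := by
    have := hle
    simp only [nboObj, Pi.zero_apply] at this
    have h0 : ∑ x : Fin (n+1), D x / 2 * (0:ℝ) ^ 2 = 0 := by simp
    linarith
  have hω : ∀ j, ωs j = 0 := by
    intro j
    have hnn : ∀ i ∈ Finset.univ, (0:ℝ) ≤ D i / 2 * ωs i ^ 2 := fun i _ =>
      mul_nonneg (div_pos (hD i) two_pos).le (sq_nonneg _)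
    have hzero : ∀ i ∈ Finset.univ, D i / 2 * ωs i ^ 2 = 0 := by
      have := (Finset.sum_eq_zero_iff_of_nonneg hnn).mp
        (le_antisymm hsum (Finset.sum_nonneg hnn))
      exact this
    have := hzero j (Finset.mem_univ j)
    have hDj : D j / 2 ≠ 0 := (div_pos (hD j) two_pos).ne'
    have : ωs j ^ 2 = 0 := by
      rcases mul_eq_zero.mp this with h | h
      · exact absurd h hDj
      · exact h
    exact pow_eq_zero_iff (by norm_num) |>.mp this
  -- Lθs = Lφs
  have hLeq : (nboLap src tgt b).mulVec θs = (nboLap src tgt b).mulVec φs := by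
    funext j
    have h3j := h3 j
    rw [hω j, mul_zero, add_zero] at h3j
    have h4j := h4 j
    linarith
  refine ⟨hLeq, ?_, ?_⟩
  · -- quadratic form argument
    have hLx : (nboLap src tgt b).mulVec (θs - φs) = 0 := by
      rw [Matrix.mulVec_sub, hLeq, sub_self]
    have hquad : ∑ e, b e * ((θs - φs) (src e) - (θs - φs) (tgt e)) ^ 2 = 0 := by
      rw [← quad_form src tgt b, hLx, dotProduct_zero]
    intro e
    have hnn : ∀ i ∈ Finset.univ, (0:ℝ) ≤ b i * ((θs - φs) (src i) - (θs - φs) (tgt i)) ^ 2 :=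
      fun i _ => mul_nonneg (hb i).le (sq_nonneg _)
    have hz := (Finset.sum_eq_zero_iff_of_nonneg hnn).mp hquad e (Finset.mem_univ e)
    have : ((θs - φs) (src e) - (θs - φs) (tgt e)) ^ 2 = 0 := by
      rcases mul_eq_zero.mp hz with h | h
      · exact absurd h (hb e).ne'
      · exact h
    have h0 : (θs - φs) (src e) - (θs - φs) (tgt e) = 0 :=
      pow_eq_zero_iff (by norm_num) |>.mp this
    simp only [Pi.sub_apply] at h0
    linarith
  · intro e
    have heq : θs (src e) - θs (tgt e) = φs (src e) - φs (tgt e) := by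
      have hLx : (nboLap src tgt b).mulVec (θs - φs) = 0 := by
        rw [Matrix.mulVec_sub, hLeq, sub_self]
      have hquad : ∑ e, b e * ((θs - φs) (src e) - (θs - φs) (tgt e)) ^ 2 = 0 := by
        rw [← quad_form src tgt b, hLx, dotProduct_zero]
      have hnn : ∀ i ∈ Finset.univ, (0:ℝ) ≤ b i * ((θs - φs) (src i) - (θs - φs) (tgt i)) ^ 2 :=
        fun i _ => mul_nonneg (hb i).le (sq_nonneg _)
      have hz := (Finset.sum_eq_zero_iff_of_nonneg hnn).mp hquad e (Finset.mem_univ e)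
      have : ((θs - φs) (src e) - (θs - φs) (tgt e)) ^ 2 = 0 := by
        rcases mul_eq_zero.mp hz with h | h
        · exact absurd h (hb e).ne'
        · exact h
      have h0 : (θs - φs) (src e) - (θs - φs) (tgt e) = 0 :=
        pow_eq_zero_iff (by norm_num) |>.mp this
      simp only [Pi.sub_apply] at h0
      linarith
    rw [heq]
    exact h5 e
end

section
/- For the projected dynamical system ẇ = H(w) - w with H(w) = Proj_S(w - F(w)), the function V̂(w) := -(H(w) - w)ᵀF(w) - (1/2)‖H(w) - w‖² satisfies V̂(w) ≥ 0 for all w ∈ S, with V̂(w) = 0 if and only if H(w) = w. -/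
/-!
Testing the projection inequality `⟪w - F w - H w, y - H w⟫ ≤ 0` at `y = w ∈ S` gives
`‖H w - w‖² ≤ -⟪H w - w, F w⟫`, hence `V̂(w) ≥ ½‖H w - w‖²`, which is nonnegative and
vanishes only when `H w = w`.
-/

open RealInnerProductSpace

theorem real_inner_sub_le_zero_of_forall_dist_le {E : Type*} [NormedAddCommGroup E]
    [InnerProductSpace ℝ E] {K : Set E} (hK : Convex ℝ K) {u p : E} (hp : p ∈ K)
    (hmin : ∀ y ∈ K, dist u p ≤ dist u y) : ∀ y ∈ K, ⟪u - p, y - p⟫ ≤ 0 := by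
  have : Nonempty K := ⟨⟨p, hp⟩⟩
  refine (norm_eq_iInf_iff_real_inner_le_zero hK hp).mp (le_antisymm ?_ ?_)
  · exact le_ciInf fun y => by simpa only [dist_eq_norm] using hmin y y.2
  · exact ciInf_le ⟨0, fun _ ⟨_, h⟩ => h ▸ norm_nonneg _⟩ (⟨p, hp⟩ : K)

theorem half_sq_norm_le_regularized_gap {E : Type*} [NormedAddCommGroup E]
    [InnerProductSpace ℝ E] {w f p : E} (hproj : ⟪w - f - p, w - p⟫ ≤ 0) :
    ‖p - w‖ ^ 2 / 2 ≤ -⟪p - w, f⟫ - ‖p - w‖ ^ 2 / 2 := by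
  have hexpand : ⟪w - f - p, w - p⟫ = ‖p - w‖ ^ 2 + ⟪p - w, f⟫ := by
    rw [show w - f - p = -(p - w) - f by abel, show w - p = -(p - w) by abel,
      inner_sub_left, inner_neg_neg, real_inner_self_eq_norm_sq, inner_neg_right,
      real_inner_comm, sub_neg_eq_add]
  linarith

theorem stmt_10_general {d : ℕ} (S : Set (EuclideanSpace ℝ (Fin d)))
    (hconv : Convex ℝ S)
    (F H : EuclideanSpace ℝ (Fin d) → EuclideanSpace ℝ (Fin d))
    (hH : ∀ w, H w ∈ S ∧ ∀ y ∈ S, dist (w - F w) (H w) ≤ dist (w - F w) y) :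
    ∀ w ∈ S,
      0 ≤ -(inner ℝ (H w - w) (F w) : ℝ) - ‖H w - w‖ ^ 2 / 2 ∧
      (-(inner ℝ (H w - w) (F w) : ℝ) - ‖H w - w‖ ^ 2 / 2 = 0 ↔ H w = w) := by
  intro w hw
  have hgap := half_sq_norm_le_regularized_gap
    (real_inner_sub_le_zero_of_forall_dist_le hconv (hH w).1 (hH w).2 w hw)
  refine ⟨(by positivity : (0 : ℝ) ≤ ‖H w - w‖ ^ 2 / 2).trans hgap, fun hzero => ?_, ?_⟩
  · have hsq : ‖H w - w‖ ^ 2 = 0 := le_antisymm (by linarith) (sq_nonneg _)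
    exact sub_eq_zero.mp (norm_eq_zero.mp (pow_eq_zero_iff two_ne_zero |>.mp hsq))
  · intro hfixed
    simp [hfixed]

/-- Fukushima's regularized gap function: if `H w` is the Euclidean projection of
`w - F w` onto the nonempty closed convex set `S`, then
`V̂(w) := -⟨H w - w, F w⟩ - ½‖H w - w‖²` is nonnegative on `S` and vanishes
exactly at fixed points `H w = w`. -/
theorem stmt_10 {d : ℕ} (S : Set (EuclideanSpace ℝ (Fin d))) (hS : S.Nonempty)
    (hclosed : IsClosed S) (hconv : Convex ℝ S)
    (F H : EuclideanSpace ℝ (Fin d) → EuclideanSpace ℝ (Fin d))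
    (hF : Continuous F)
    (hH : ∀ w, H w ∈ S ∧ ∀ y ∈ S, dist (w - F w) (H w) ≤ dist (w - F w) y) :
    ∀ w ∈ S,
      0 ≤ -(inner ℝ (H w - w) (F w) : ℝ) - ‖H w - w‖ ^ 2 / 2 ∧
      (-(inner ℝ (H w - w) (F w) : ℝ) - ‖H w - w‖ ^ 2 / 2 = 0 ↔ H w = w) :=
  stmt_10_general S hconv F H hH
end
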